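/- arXiv:1808.02137 — 2 statements merged into one kernel-verified Lean document; each statement's English description precedes it below -/
import Mathlib

section
/- Let 1 < p < ∞ and define the operator L on L^p(ℝ^d;ℝ^d) componentwise by (Lf)_k = f_k − 3 R_k(Σ_{j=1}^d R_j f_j), where R_j are the Riesz transforms. Then there exists a constant C = C(d,p) > 0 such that ‖f‖_{L^p(ℝ^d)} ≤ C ‖Lf‖_{L^p(ℝ^d)} for all f ∈ L^p(ℝ^d;ℝ^d). -/
open MeasureTheory
open scoped ENNReal

noncomputable section

set_option maxHeartbeats 1000000 in
/-- if `R_j` (`j = 1,…,d`) are the Riesz transforms, realized as bounded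
linear operators on `L^p(ℝ^d)` satisfying `Σ_j R_j R_j = −Id`, and
`(Lf)_k = f_k − 3 R_k(Σ_j R_j f_j)`, then `‖f‖_{L^p} ≤ C ‖Lf‖_{L^p}`. -/
theorem stmt8 (d : ℕ) (hd : 1 ≤ d) (p : ℝ≥0∞) [Fact (1 ≤ p)] (hp : 1 < p) (hp' : p < ⊤)
    (R : Fin d → (Lp ℝ p (volume : Measure (EuclideanSpace ℝ (Fin d))) →L[ℝ]
      Lp ℝ p (volume : Measure (EuclideanSpace ℝ (Fin d)))))
    (hR : ∀ g, ∑ j, R j (R j g) = -g) :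
    ∃ C > (0 : ℝ),
      ∀ f : Fin d → Lp ℝ p (volume : Measure (EuclideanSpace ℝ (Fin d))),
        (∑ k, ‖f k‖) ≤ C * ∑ k, ‖f k - (3 : ℝ) • R k (∑ j, R j (f j))‖ := by
  classical
  set M : ℝ := ∑ k, ‖R k‖ with hM
  have hM0 : 0 ≤ M := Finset.sum_nonneg fun _ _ => norm_nonneg _
  refine ⟨1 + M ^ 2, by positivity, ?_⟩
  intro f
  set S := ∑ j, R j (f j) with hS
  set g : Fin d → Lp ℝ p (volume : Measure (EuclideanSpace ℝ (Fin d))) :=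
    fun k => f k - (3 : ℝ) • R k S with hg
  -- key identity: ∑ j, R j (g j) = 4 • S
  have hSg : ∑ j, R j (g j) = (4 : ℝ) • S := by
    have : ∑ j, R j (g j) = (∑ j, R j (f j)) - (3 : ℝ) • ∑ j, R j (R j S) := by
      rw [Finset.smul_sum, ← Finset.sum_sub_distrib]
      refine Finset.sum_congr rfl fun j _ => ?_
      simp [hg, map_sub, _root_.map_smul]
    rw [this, hR S, ← hS]
    module
  -- norm of S controlled by g
  have hT : ∀ j, ‖R j (g j)‖ ≤ ‖R j‖ * ‖g j‖ := fun j => (R j).le_opNorm _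
  have hS4 : (4 : ℝ) * ‖S‖ ≤ ∑ j, ‖R j‖ * ‖g j‖ := by
    have h1 : ‖(4 : ℝ) • S‖ ≤ ∑ j, ‖R j‖ * ‖g j‖ := by
      rw [← hSg]
      exact (norm_sum_le _ _).trans (Finset.sum_le_sum fun j _ => hT j)
    simpa [norm_smul] using h1
  have hSn : 0 ≤ ‖S‖ := norm_nonneg _
  -- each ‖f k‖ bounded
  have key : ∀ k, ‖f k‖ ≤ ‖g k‖ + ‖R k‖ * ∑ j, ‖R j‖ * ‖g j‖ := by
    intro k
    have hfk : f k = g k + (3 : ℝ) • R k S := by simp [hg]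
    have h2 : ‖(3 : ℝ) • R k S‖ ≤ ‖R k‖ * ∑ j, ‖R j‖ * ‖g j‖ := by
      have h3 : ‖R k S‖ ≤ ‖R k‖ * ‖S‖ := (R k).le_opNorm _
      have : (3 : ℝ) * ‖S‖ ≤ ∑ j, ‖R j‖ * ‖g j‖ := by linarith
      calc ‖(3 : ℝ) • R k S‖ = 3 * ‖R k S‖ := by simp [norm_smul]
        _ ≤ 3 * (‖R k‖ * ‖S‖) := by nlinarith [norm_nonneg (R k S)]
        _ = ‖R k‖ * (3 * ‖S‖) := by ring
        _ ≤ ‖R k‖ * ∑ j, ‖R j‖ * ‖g j‖ := by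
            exact mul_le_mul_of_nonneg_left this (norm_nonneg _)
    calc ‖f k‖ = ‖g k + (3 : ℝ) • R k S‖ := by rw [hfk]
      _ ≤ ‖g k‖ + ‖(3 : ℝ) • R k S‖ := norm_add_le _ _
      _ ≤ ‖g k‖ + ‖R k‖ * ∑ j, ‖R j‖ * ‖g j‖ := by linarith
  -- sum up
  have hGn : 0 ≤ ∑ k, ‖g k‖ := Finset.sum_nonneg fun _ _ => norm_nonneg _
  have hTsum : ∑ j, ‖R j‖ * ‖g j‖ ≤ M * ∑ j, ‖g j‖ := by
    rw [Finset.mul_sum]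
    refine Finset.sum_le_sum fun j _ => ?_
    refine mul_le_mul_of_nonneg_right ?_ (norm_nonneg _)
    exact Finset.single_le_sum (f := fun i => ‖R i‖) (fun i _ => norm_nonneg _)
      (Finset.mem_univ j)
  calc ∑ k, ‖f k‖ ≤ ∑ k, (‖g k‖ + ‖R k‖ * ∑ j, ‖R j‖ * ‖g j‖) :=
        Finset.sum_le_sum fun k _ => key k
    _ = (∑ k, ‖g k‖) + (∑ k, ‖R k‖) * ∑ j, ‖R j‖ * ‖g j‖ := by
        rw [Finset.sum_add_distrib, Finset.sum_mul]
    _ ≤ (∑ k, ‖g k‖) + M * (M * ∑ j, ‖g j‖) := by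
        have hTn : 0 ≤ ∑ j, ‖R j‖ * ‖g j‖ :=
          Finset.sum_nonneg fun j _ => mul_nonneg (norm_nonneg _) (norm_nonneg _)
        have := mul_le_mul_of_nonneg_left hTsum hM0
        rw [← hM]; linarith
    _ = (1 + M ^ 2) * ∑ k, ‖g k‖ := by ring
end
end

section
/- For every v ∈ ℝ^{d+1} of the form v = (z,0) with z ∈ ℝ^d and for every y ∈ ℝ^d \ {0}, t > 0, one has |∂_{tt} ℙ_t(y) v| = |∂_{tt} P̄(y,t)| · |z · y/|y||, and consequently if V(x,t) := ∫_{ℝ^d} ℙ_t(y)(g(x+y)−g(x),0) dy for g : ℝ^d → ℝ^d, then |∂_{tt}V(x,t)| ≤ ∫_{ℝ^d} |∂_{tt} P̄(y,t)| · |(g(x+y)−g(x))·(y/|y|)| dy. -/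
open MeasureTheory Real

noncomputable section

/-- The matrix-valued Poisson-type kernel. -/
def Pker (d : ℕ) (ω t : ℝ) (x : EuclideanSpace ℝ (Fin d)) :
    Matrix (Fin d ⊕ Unit) (Fin d ⊕ Unit) ℝ :=
  Matrix.of fun i j =>
    (2 * ((d : ℝ) + 1) / ω) * t / (‖x‖ ^ 2 + t ^ 2) ^ (((d : ℝ) + 3) / 2) *
      Sum.elim
        (fun a => Sum.elim (fun b => x a * x b) (fun _ => t * x a) j)
        (fun _ => Sum.elim (fun b => t * x b) (fun _ => t ^ 2) j) i

/-- The vector kernel `P̄(x,t)`. -/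
def Pbar (d : ℕ) (ω t : ℝ) (x : EuclideanSpace ℝ (Fin d)) : Fin d ⊕ Unit → ℝ :=
  fun i =>
    (2 * ((d : ℝ) + 1) / ω) * (t * ‖x‖ / (‖x‖ ^ 2 + t ^ 2) ^ (((d : ℝ) + 3) / 2)) *
      Sum.elim (fun a => x a) (fun _ => t) i

lemma pker_mulVec_eq (d : ℕ) (ω σ : ℝ) (y z : EuclideanSpace ℝ (Fin d)) (i : Fin d ⊕ Unit) :
    ((Pker d ω σ y).mulVec (Sum.elim (fun a => z a) (fun _ => (0:ℝ)))) i
      = (∑ a, z a * (y a / ‖y‖)) * Pbar d ω σ y i := by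
  by_cases hy : y = 0
  · subst hy
    have h0 : ∀ a : Fin d, (0 : EuclideanSpace ℝ (Fin d)) a = 0 := fun a => rfl
    cases i <;>
      simp [Pker, Pbar, Matrix.mulVec, dotProduct, Fintype.sum_sum_type, h0]
  · have hr : ‖y‖ ≠ 0 := norm_ne_zero_iff.mpr hy
    set A := 2 * ((d:ℝ) + 1) / ω with hA
    set Q := (‖y‖ ^ 2 + σ ^ 2) ^ (((d:ℝ) + 3) / 2) with hQ
    have hcs : ∑ a, z a * (y a / ‖y‖) = (∑ a, z a * y a) / ‖y‖ := by
      rw [Finset.sum_div]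
      exact Finset.sum_congr rfl fun a _ => by ring
    have key : ∀ e : ℝ, (∑ a, z a * (y a / ‖y‖)) * (A * (σ * ‖y‖ / Q) * e)
        = (∑ b, z b * y b) * (A * σ / Q * e) := by
      intro e
      rw [hcs, show (∑ a, z a * y a) / ‖y‖ * (A * (σ * ‖y‖ / Q) * e)
          = (‖y‖ / ‖y‖) * ((∑ b, z b * y b) * (A * σ / Q * e)) from by ring,
        div_self hr, one_mul]
    cases i with
    | inl a =>
      simp only [Pker, Pbar, Matrix.mulVec, dotProduct, Matrix.of_apply,
        Fintype.sum_sum_type, Sum.elim_inl, Sum.elim_inr, Finset.univ_unique,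
        Finset.sum_singleton, mul_zero, Finset.sum_const_zero, add_zero]
      rw [key (y a),
        show (∑ b, A * σ / Q * (y a * y b) * z b)
          = ∑ b, (z b * y b) * (A * σ / Q * y a) from
            Finset.sum_congr rfl fun b _ => by ring,
        ← Finset.sum_mul]
    | inr u =>
      simp only [Pker, Pbar, Matrix.mulVec, dotProduct, Matrix.of_apply,
        Fintype.sum_sum_type, Sum.elim_inl, Sum.elim_inr, Finset.univ_unique,
        Finset.sum_singleton, mul_zero, Finset.sum_const_zero, add_zero]
      rw [key σ,
        show (∑ b, A * σ / Q * (σ * y b) * z b)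
          = ∑ b, (z b * y b) * (A * σ / Q * σ) from
            Finset.sum_congr rfl fun b _ => by ring,
        ← Finset.sum_mul]

lemma dd_eq (d : ℕ) (ω : ℝ) (y z : EuclideanSpace ℝ (Fin d)) (t : ℝ) (i : Fin d ⊕ Unit) :
    deriv (deriv (fun σ => ((Pker d ω σ y).mulVec
        (Sum.elim (fun a => z a) (fun _ => (0:ℝ)))) i)) t
      = (∑ a, z a * (y a / ‖y‖)) * deriv (deriv (fun σ => Pbar d ω σ y i)) t := by
  have h1 : (fun σ => ((Pker d ω σ y).mulVec (Sum.elim (fun a => z a) (fun _ => (0:ℝ)))) i)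
      = fun σ => (∑ a, z a * (y a / ‖y‖)) * Pbar d ω σ y i :=
    funext fun σ => pker_mulVec_eq d ω σ y z i
  rw [h1, deriv_const_mul_field', deriv_const_mul_field]

lemma sqrt_sum_mul {ι : Type*} [Fintype ι] (c : ℝ) (D : ι → ℝ) :
    Real.sqrt (∑ i, (c * D i) ^ 2) = Real.sqrt (∑ i, (D i) ^ 2) * |c| := by
  have h : ∑ i, (c * D i) ^ 2 = c ^ 2 * ∑ i, (D i) ^ 2 := by
    rw [Finset.mul_sum]; exact Finset.sum_congr rfl fun i _ => by ring
  rw [h, Real.sqrt_mul (sq_nonneg c), Real.sqrt_sq_eq_abs, mul_comm]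

lemma l2_lemma {α : Type*} [MeasurableSpace α] {μ : Measure α} {ι : Type*} [Fintype ι]
    (f : ι → α → ℝ) (h : α → ℝ) (hh : Integrable h μ)
    (hb : ∀ a, Real.sqrt (∑ i, (f i a) ^ 2) ≤ h a) :
    Real.sqrt (∑ i, (∫ a, f i a ∂μ) ^ 2) ≤ ∫ a, h a ∂μ := by
  classical
  have hpos : ∀ a, 0 ≤ h a := fun a => le_trans (Real.sqrt_nonneg _) (hb a)
  set I := fun i => ∫ a, f i a ∂μ with hI
  set u := fun i => if Integrable (f i) μ then I i else 0 with hu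
  have hua : ∀ i, u i * I i = (I i) ^ 2 := by
    intro i; by_cases hi : Integrable (f i) μ
    · simp only [hu, if_pos hi]; ring
    · simp only [hu, if_neg hi, hI, integral_undef hi, zero_mul]
      simp [integral_undef hi]
  have huint : ∀ i, Integrable (fun a => u i * f i a) μ := by
    intro i; by_cases hi : Integrable (f i) μ
    · exact hi.const_mul _
    · simp only [hu, if_neg hi, zero_mul]
      exact integrable_zero _ _ _
  have husq : ∑ i, (u i) ^ 2 ≤ ∑ i, (I i) ^ 2 := by
    refine Finset.sum_le_sum fun i _ => ?_
    by_cases hi : Integrable (f i) μ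
    · simp [hu, if_pos hi]
    · simp [hu, if_neg hi, sq_nonneg]
  set N := Real.sqrt (∑ i, (I i) ^ 2) with hNdef
  have hNnn : 0 ≤ N := Real.sqrt_nonneg _
  have hNsq : N ^ 2 = ∑ i, (I i) ^ 2 :=
    Real.sq_sqrt (Finset.sum_nonneg fun i _ => sq_nonneg _)
  have hpt : ∀ a, ∑ i, u i * f i a ≤ N * h a := by
    intro a
    have c1 : (∑ i, u i * f i a) ^ 2 ≤ (∑ i, (u i) ^ 2) * (∑ i, (f i a) ^ 2) :=
      Finset.sum_mul_sq_le_sq_mul_sq _ _ _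
    calc ∑ i, u i * f i a ≤ |∑ i, u i * f i a| := le_abs_self _
      _ = Real.sqrt ((∑ i, u i * f i a) ^ 2) := (Real.sqrt_sq_eq_abs _).symm
      _ ≤ Real.sqrt ((∑ i, (u i) ^ 2) * (∑ i, (f i a) ^ 2)) := Real.sqrt_le_sqrt c1
      _ = Real.sqrt (∑ i, (u i) ^ 2) * Real.sqrt (∑ i, (f i a) ^ 2) :=
          Real.sqrt_mul (Finset.sum_nonneg fun i _ => sq_nonneg _) _
      _ ≤ N * h a := by
          refine mul_le_mul ?_ (hb a) (Real.sqrt_nonneg _) hNnn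
          exact Real.sqrt_le_sqrt husq
  have key : N ^ 2 ≤ N * ∫ a, h a ∂μ := by
    have h1 : ∑ i, u i * I i = ∫ a, ∑ i, u i * f i a ∂μ := by
      rw [integral_finset_sum _ (fun i _ => huint i)]
      exact Finset.sum_congr rfl fun i _ => (integral_const_mul _ _).symm
    have h2 : ∫ a, ∑ i, u i * f i a ∂μ ≤ ∫ a, N * h a ∂μ :=
      integral_mono (integrable_finset_sum _ fun i _ => huint i) (hh.const_mul N) hpt
    calc N ^ 2 = ∑ i, (I i) ^ 2 := hNsq
      _ = ∑ i, u i * I i := Finset.sum_congr rfl fun i _ => (hua i).symm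
      _ ≤ ∫ a, N * h a ∂μ := h1 ▸ h2
      _ = N * ∫ a, h a ∂μ := integral_const_mul _ _
  rcases eq_or_lt_of_le hNnn with h0 | h0
  · rw [← h0]; exact integral_nonneg hpos
  · have := key
    rw [pow_two] at this
    exact le_of_mul_le_mul_left this h0

/-- `|∂_tt ℙ_t(y)(z,0)| = |∂_tt P̄(y,t)|·|z·y/|y||`, and if
`V(x,t) = ∫ ℙ_t(y)(g(x+y)−g(x),0) dy` (with differentiation under the integral sign and
the relevant integrals absolutely convergent) then
`|∂_tt V(x,t)| ≤ ∫ |∂_tt P̄(y,t)|·|(g(x+y)−g(x))·y/|y|| dy`. -/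
theorem stmt14 (d : ℕ) (hd : 1 ≤ d) (ω : ℝ) (hω : 0 < ω)
    (y : EuclideanSpace ℝ (Fin d)) (hy : y ≠ 0) (t : ℝ) (ht : 0 < t)
    (z : EuclideanSpace ℝ (Fin d))
    (g : EuclideanSpace ℝ (Fin d) → EuclideanSpace ℝ (Fin d))
    (x : EuclideanSpace ℝ (Fin d))
    (V : EuclideanSpace ℝ (Fin d) → ℝ → (Fin d ⊕ Unit → ℝ))
    (hVdef : ∀ x' t' i, V x' t' i
      = ∫ y', ((Pker d ω t' y').mulVec
          (Sum.elim (fun k => g (x' + y') k - g x' k) (fun _ => 0))) i)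
    (hswap : ∀ i, deriv (deriv (fun σ => V x σ i)) t
      = ∫ y', deriv (deriv (fun σ => ((Pker d ω σ y').mulVec
          (Sum.elim (fun k => g (x + y') k - g x k) (fun _ => 0))) i)) t)
    (hInt : Integrable (fun y' : EuclideanSpace ℝ (Fin d) =>
      Real.sqrt (∑ i, (deriv (deriv (fun σ => Pbar d ω σ y' i)) t) ^ 2) *
        |∑ a, (g (x + y') a - g x a) * (y' a / ‖y'‖)|) volume) :
    Real.sqrt (∑ i, (deriv (deriv (fun σ => ((Pker d ω σ y).mulVec
          (Sum.elim (fun a => z a) (fun _ => 0))) i)) t) ^ 2)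
        = Real.sqrt (∑ i, (deriv (deriv (fun σ => Pbar d ω σ y i)) t) ^ 2) *
            |∑ a, z a * (y a / ‖y‖)|
    ∧ Real.sqrt (∑ i, (deriv (deriv (fun σ => V x σ i)) t) ^ 2)
        ≤ ∫ y', Real.sqrt (∑ i, (deriv (deriv (fun σ => Pbar d ω σ y' i)) t) ^ 2) *
            |∑ a, (g (x + y') a - g x a) * (y' a / ‖y'‖)| := by
  constructor
  · simp only [dd_eq]
    exact sqrt_sum_mul _ _
  · simp only [hswap]
    refine l2_lemma _ _ hInt ?_
    intro y'
    have heq : ∀ i, deriv (deriv (fun σ => ((Pker d ω σ y').mulVec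
        (Sum.elim (fun k => g (x + y') k - g x k) (fun _ => 0))) i)) t
        = (∑ a, (g (x + y') a - g x a) * (y' a / ‖y'‖)) *
            deriv (deriv (fun σ => Pbar d ω σ y' i)) t :=
      fun i => dd_eq d ω y' (WithLp.toLp 2 (fun k => g (x + y') k - g x k)) t i
    simp only [heq]
    exact le_of_eq (sqrt_sum_mul _ _)
end
end
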